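/- For every m ∈ ℕ and k ∈ ℕ there exists C = C(m,k) > 0 such that for every rapidly decreasing function g : ℤ → ℂ (i.e., sup_{n∈ℤ} (1+|n|)^N |g(n)| < ∞ for every N ∈ ℕ), one has sup_{n∈ℤ} (1+|n|)^m |g(n)| ≤ C · sup_{n∈ℤ} (1+|n|)^{m+4k} |Δ_d^k g(n)|. -/

import Mathlib

open ENNReal Filter

def discLap (g : ℤ → ℂ) (n : ℤ) : ℂ := -g (n + 1) + 2 * g n - g (n - 1)

def Rapid (g : ℤ → ℂ) : Prop := ∀ N : ℕ, ∃ B : ℝ, ∀ n : ℤ, (1 + |(n : ℝ)|) ^ N * ‖g n‖ ≤ B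

lemma rapid_shift {g : ℤ → ℂ} (hg : Rapid g) (c : ℤ) : Rapid (fun n => g (n + c)) := by
  intro N
  obtain ⟨B, hB⟩ := hg N
  refine ⟨(1 + |(c:ℝ)|)^N * B, fun n => ?_⟩
  have h1 : (1 + |(n:ℝ)|) ≤ (1 + |(c:ℝ)|) * (1 + |((n+c:ℤ):ℝ)|) := by
    push_cast
    have := abs_nonneg ((n:ℝ)+c)
    have := abs_nonneg ((c:ℝ))
    have h2 : |(n:ℝ)| ≤ |(n:ℝ)+c| + |(c:ℝ)| := by
      have := abs_add_le ((n:ℝ)+c) (-c)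
      simpa using this
    nlinarith
  have h3 : (1 + |(n:ℝ)|)^N ≤ ((1 + |(c:ℝ)|) * (1 + |((n+c:ℤ):ℝ)|))^N :=
    pow_le_pow_left₀ (by positivity) h1 N
  calc (1 + |(n:ℝ)|)^N * ‖g (n+c)‖ ≤ ((1 + |(c:ℝ)|) * (1 + |((n+c:ℤ):ℝ)|))^N * ‖g (n+c)‖ := by
        exact mul_le_mul_of_nonneg_right h3 (norm_nonneg _)
    _ = (1 + |(c:ℝ)|)^N * ((1 + |((n+c:ℤ):ℝ)|)^N * ‖g (n+c)‖) := by rw [mul_pow]; ring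
    _ ≤ (1 + |(c:ℝ)|)^N * B := by
        refine mul_le_mul_of_nonneg_left (hB (n+c)) (by positivity)

lemma rapid_sub {g h : ℤ → ℂ} (hg : Rapid g) (hh : Rapid h) :
    Rapid (fun n => g n - h n) := by
  intro N
  obtain ⟨B, hB⟩ := hg N
  obtain ⟨B', hB'⟩ := hh N
  refine ⟨B + B', fun n => ?_⟩
  calc (1 + |(n:ℝ)|)^N * ‖g n - h n‖ ≤ (1 + |(n:ℝ)|)^N * (‖g n‖ + ‖h n‖) := by
        exact mul_le_mul_of_nonneg_left (norm_sub_le _ _) (by positivity)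
    _ = (1 + |(n:ℝ)|)^N * ‖g n‖ + (1 + |(n:ℝ)|)^N * ‖h n‖ := by ring
    _ ≤ B + B' := add_le_add (hB n) (hB' n)

lemma rapid_const_mul {g : ℤ → ℂ} (hg : Rapid g) (z : ℂ) : Rapid (fun n => z * g n) := by
  intro N
  obtain ⟨B, hB⟩ := hg N
  refine ⟨‖z‖ * B, fun n => ?_⟩
  have h0 : (0:ℝ) ≤ (1 + |(n:ℝ)|)^N * ‖g n‖ := by positivity
  calc (1 + |(n:ℝ)|)^N * ‖z * g n‖ = ‖z‖ * ((1 + |(n:ℝ)|)^N * ‖g n‖) := by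
        rw [norm_mul]; ring
    _ ≤ ‖z‖ * B := mul_le_mul_of_nonneg_left (hB n) (norm_nonneg _)

lemma rapid_neg_comp {g : ℤ → ℂ} (hg : Rapid g) : Rapid (fun n => g (-n)) := by
  intro N
  obtain ⟨B, hB⟩ := hg N
  refine ⟨B, fun n => ?_⟩
  have := hB (-n)
  simpa using this

/-- the forward difference -/
def fd (g : ℤ → ℂ) (n : ℤ) : ℂ := g (n + 1) - g n

lemma rapid_fd {g : ℤ → ℂ} (hg : Rapid g) : Rapid (fd g) :=
  rapid_sub (rapid_shift hg 1) hg

lemma rapid_discLap {g : ℤ → ℂ} (hg : Rapid g) : Rapid (discLap g) := by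
  have h1 : Rapid (fun n => (2:ℂ) * g n - g (n + 1)) :=
    rapid_sub (rapid_const_mul hg 2) (rapid_shift hg 1)
  have h2 := rapid_sub h1 (rapid_shift hg (-1))
  intro N
  obtain ⟨B, hB⟩ := h2 N
  refine ⟨B, fun n => ?_⟩
  have := hB n
  simpa [discLap, sub_eq_add_neg, add_comm] using this

lemma rapid_summable_norm {g : ℤ → ℂ} (hg : Rapid g) : Summable (fun j : ℤ => ‖g j‖) := by
  obtain ⟨B, hB⟩ := hg 2
  refine Summable.of_norm_bounded_eventually (g := fun j : ℤ => B * (1 / (j:ℝ)^2))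
    ((Real.summable_one_div_int_pow.mpr one_lt_two).mul_left B) ?_
  have : ({0} : Set ℤ).Finite := Set.finite_singleton 0
  refine Set.Finite.subset this ?_
  intro j hj
  simp only [Set.mem_compl_iff, Set.mem_setOf_eq, not_le] at hj
  simp only [Set.mem_singleton_iff]
  by_contra hj0
  have hj1 : (1:ℝ) ≤ |(j:ℝ)| := by exact_mod_cast Int.one_le_abs hj0
  have hpos : (0:ℝ) < (j:ℝ)^2 := by
    have : (j:ℝ) ≠ 0 := Int.cast_ne_zero.mpr hj0
    positivity
  have hb := hB j
  have hsq : (j:ℝ)^2 ≤ (1 + |(j:ℝ)|)^2 := by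
    rw [← sq_abs]
    have := abs_nonneg (j:ℝ)
    nlinarith
  have hgj : ‖g j‖ * (j:ℝ)^2 ≤ B := by
    calc ‖g j‖ * (j:ℝ)^2 ≤ ‖g j‖ * (1 + |(j:ℝ)|)^2 :=
          mul_le_mul_of_nonneg_left hsq (norm_nonneg _)
      _ ≤ B := by rw [mul_comm]; exact hb
  have hfin : ‖g j‖ ≤ B * (1 / (j:ℝ)^2) := by
    rw [mul_one_div, le_div_iff₀ hpos]
    exact hgj
  rw [Real.norm_eq_abs, abs_of_nonneg (norm_nonneg _)] at hj
  linarith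

lemma rapid_summable_shift {g : ℤ → ℂ} (hg : Rapid g) (n : ℤ) :
    Summable (fun a : ℕ => ‖g (n + a)‖) := by
  have h := (rapid_summable_norm hg).comp_injective
    (i := fun a : ℕ => n + (a:ℤ)) (fun a b hab => Nat.cast_injective (add_left_cancel hab))
  exact h

lemma hasSum_fd {g : ℤ → ℂ} (hg : Rapid g) (n : ℤ) :
    HasSum (fun a : ℕ => fd g (n + a)) (-(g n)) := by
  have hsum : Summable (fun a : ℕ => fd g (n + a)) :=
    (rapid_summable_shift (rapid_fd hg) n).of_norm
  have ht := hsum.hasSum.tendsto_sum_nat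
  have hps : ∀ A : ℕ, ∑ a ∈ Finset.range A, fd g (n + a) = g (n + A) - g n := by
    intro A
    have h := Finset.sum_range_sub (f := fun a : ℕ => g (n + a)) A
    simp only [Nat.cast_zero, add_zero] at h
    rw [← h]
    refine Finset.sum_congr rfl fun i _ => ?_
    have : ((i:ℤ) + 1) = ((i + 1 : ℕ) : ℤ) := by push_cast; ring
    simp only [fd, ← this, ← add_assoc]
  simp only [hps] at ht
  have hz : Tendsto (fun A : ℕ => g (n + A)) atTop (nhds 0) :=
    ((rapid_summable_shift hg n).of_norm).tendsto_atTop_zero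
  have hz2 : Tendsto (fun A : ℕ => g (n + A) - g n) atTop (nhds (0 - g n)) :=
    hz.sub_const _
  rw [zero_sub] at hz2
  have := tendsto_nhds_unique ht hz2
  exact this ▸ hsum.hasSum

lemma hasSum_discLap {g : ℤ → ℂ} (hg : Rapid g) (j : ℤ) :
    HasSum (fun b : ℕ => discLap g (j + 1 + b)) (fd g j) := by
  have h1 := hasSum_fd (rapid_fd hg) j
  have h2 : ∀ b : ℕ, fd (fd g) (j + b) = -(discLap g (j + 1 + b)) := by
    intro b
    simp only [fd, discLap]
    have e2 : j + 1 + (b:ℤ) - 1 = j + b := by ring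
    have e3 : j + 1 + (b:ℤ) = j + b + 1 := by ring
    rw [e2, e3]
    ring
  simp only [h2] at h1
  simpa using h1.neg

noncomputable def Kc : ℝ := ∑' b : ℕ, (((b:ℝ) + 1) ^ 2)⁻¹

lemma Kc_summable : Summable (fun b : ℕ => (((b:ℝ) + 1) ^ 2)⁻¹) := by
  have h0 : Summable (fun b : ℕ => ((b:ℝ) ^ 2)⁻¹) :=
    Real.summable_nat_pow_inv.mpr one_lt_two
  have h1 := (summable_nat_add_iff 1).mpr h0
  exact h1.congr fun b => by push_cast; ring_nf

lemma Kc_pos : 0 < Kc :=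
  Summable.tsum_pos Kc_summable (fun b => by positivity) 0 (by norm_num)

lemma halfline {g : ℤ → ℂ} (hg : Rapid g) (m : ℕ) (S : ℝ)
    (hS : ∀ i : ℤ, (1 + |(i:ℝ)|) ^ (m + 4) * ‖discLap g i‖ ≤ S) {n : ℤ} (hn : 0 ≤ n) :
    (1 + |(n:ℝ)|) ^ m * ‖g n‖ ≤ Kc ^ 2 * S := by
  have hx : (0:ℝ) ≤ (n:ℝ) := by exact_mod_cast hn
  have hS0 : 0 ≤ S := le_trans (by positivity) (hS 0)
  have hpm : (0:ℝ) < (1 + (n:ℝ)) ^ m := by positivity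
  have hΔ : ∀ a b : ℕ, ‖discLap g (n + a + 1 + b)‖ ≤
      S * (((1 + (n:ℝ)) ^ m)⁻¹ * (((a:ℝ) + 1) ^ 2)⁻¹) * (((b:ℝ) + 1) ^ 2)⁻¹ := by
    intro a b
    have ha0 : (0:ℝ) ≤ a := Nat.cast_nonneg a
    have hb0 : (0:ℝ) ≤ b := Nat.cast_nonneg b
    have hiR : |((n + a + 1 + b : ℤ):ℝ)| = (n:ℝ) + a + 1 + b := by
      rw [abs_of_nonneg (by push_cast; linarith)]
      push_cast; ring
    have hkey := hS (n + a + 1 + b)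
    rw [hiR] at hkey
    set t : ℝ := 1 + ((n:ℝ) + a + 1 + b) with htdef
    have ht1 : (1:ℝ) + (n:ℝ) ≤ t := by simp only [htdef]; linarith
    have ht0 : (0:ℝ) < t := by simp only [htdef]; linarith
    have ht2 : ((a:ℝ) + 1) * ((b:ℝ) + 1) ≤ t ^ 2 := by nlinarith
    have hP : (1 + (n:ℝ)) ^ m * (((a:ℝ) + 1) ^ 2 * ((b:ℝ) + 1) ^ 2) ≤ t ^ (m + 4) := by
      have h1 : (1 + (n:ℝ)) ^ m ≤ t ^ m := pow_le_pow_left₀ (by linarith) ht1 m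
      have h2 : (((a:ℝ) + 1) * ((b:ℝ) + 1)) ^ 2 ≤ (t ^ 2) ^ 2 :=
        pow_le_pow_left₀ (by positivity) ht2 2
      calc (1 + (n:ℝ)) ^ m * (((a:ℝ) + 1) ^ 2 * ((b:ℝ) + 1) ^ 2)
          = (1 + (n:ℝ)) ^ m * (((a:ℝ) + 1) * ((b:ℝ) + 1)) ^ 2 := by ring
        _ ≤ t ^ m * (t ^ 2) ^ 2 :=
            mul_le_mul h1 h2 (by positivity) (by positivity)
        _ = t ^ (m + 4) := by rw [pow_add]; ring
    have hΔle : ‖discLap g (n + a + 1 + b)‖ ≤ S / t ^ (m + 4) := by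
      rw [le_div_iff₀ (by positivity)]
      calc ‖discLap g (n + a + 1 + b)‖ * t ^ (m + 4)
          = t ^ (m + 4) * ‖discLap g (n + a + 1 + b)‖ := by ring
        _ ≤ S := hkey
    calc ‖discLap g (n + a + 1 + b)‖ ≤ S / t ^ (m + 4) := hΔle
      _ ≤ S / ((1 + (n:ℝ)) ^ m * (((a:ℝ) + 1) ^ 2 * ((b:ℝ) + 1) ^ 2)) :=
          div_le_div_of_nonneg_left hS0 (by positivity) hP
      _ = S * (((1 + (n:ℝ)) ^ m)⁻¹ * (((a:ℝ) + 1) ^ 2)⁻¹) * (((b:ℝ) + 1) ^ 2)⁻¹ := by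
          rw [div_eq_mul_inv, mul_inv, mul_inv]; ring
  have hfdb : ∀ a : ℕ, ‖fd g (n + a)‖ ≤
      S * (((1 + (n:ℝ)) ^ m)⁻¹ * (((a:ℝ) + 1) ^ 2)⁻¹) * Kc := by
    intro a
    have hs := hasSum_discLap hg (n + a)
    rw [← hs.tsum_eq]
    have hSb : Summable (fun b : ℕ => ‖discLap g (n + a + 1 + b)‖) :=
      rapid_summable_shift (rapid_discLap hg) (n + a + 1)
    calc ‖∑' b : ℕ, discLap g (n + a + 1 + b)‖ ≤ ∑' b : ℕ, ‖discLap g (n + a + 1 + b)‖ :=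
          norm_tsum_le_tsum_norm hSb
      _ ≤ ∑' b : ℕ, S * (((1 + (n:ℝ)) ^ m)⁻¹ * (((a:ℝ) + 1) ^ 2)⁻¹) * (((b:ℝ) + 1) ^ 2)⁻¹ :=
          Summable.tsum_le_tsum (hΔ a) hSb (Kc_summable.mul_left _)
      _ = S * (((1 + (n:ℝ)) ^ m)⁻¹ * (((a:ℝ) + 1) ^ 2)⁻¹) * Kc := by
          rw [tsum_mul_left]
          rfl
  have hgn := hasSum_fd hg n
  have hfdS : Summable (fun a : ℕ => ‖fd g (n + a)‖) :=
    rapid_summable_shift (rapid_fd hg) n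
  have hgle : ‖g n‖ ≤ S * ((1 + (n:ℝ)) ^ m)⁻¹ * (Kc * Kc) := by
    have h1 : ‖g n‖ = ‖∑' a : ℕ, fd g (n + a)‖ := by rw [hgn.tsum_eq, norm_neg]
    rw [h1]
    have hsum2 : Summable (fun a : ℕ =>
        S * (((1 + (n:ℝ)) ^ m)⁻¹ * (((a:ℝ) + 1) ^ 2)⁻¹) * Kc) :=
      ((Kc_summable.mul_left (S * ((1 + (n:ℝ)) ^ m)⁻¹)).mul_right Kc).congr fun a => by ring
    calc ‖∑' a : ℕ, fd g (n + a)‖ ≤ ∑' a : ℕ, ‖fd g (n + a)‖ := norm_tsum_le_tsum_norm hfdS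
      _ ≤ ∑' a : ℕ, S * (((1 + (n:ℝ)) ^ m)⁻¹ * (((a:ℝ) + 1) ^ 2)⁻¹) * Kc :=
          Summable.tsum_le_tsum hfdb hfdS hsum2
      _ = S * ((1 + (n:ℝ)) ^ m)⁻¹ * (Kc * Kc) := by
          rw [show (fun a : ℕ => S * (((1 + (n:ℝ)) ^ m)⁻¹ * (((a:ℝ) + 1) ^ 2)⁻¹) * Kc)
              = fun a : ℕ => (S * ((1 + (n:ℝ)) ^ m)⁻¹ * Kc) * (((a:ℝ) + 1) ^ 2)⁻¹
              from funext fun a => by ring]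
          rw [tsum_mul_left]
          have hK : ∑' b : ℕ, (((b:ℝ) + 1) ^ 2)⁻¹ = Kc := rfl
          rw [hK]
          ring
  rw [abs_of_nonneg hx]
  have hne : ((1 + (n:ℝ)) ^ m) ≠ 0 := hpm.ne'
  calc (1 + (n:ℝ)) ^ m * ‖g n‖
      ≤ (1 + (n:ℝ)) ^ m * (S * ((1 + (n:ℝ)) ^ m)⁻¹ * (Kc * Kc)) :=
        mul_le_mul_of_nonneg_left hgle hpm.le
    _ = Kc ^ 2 * S := by field_simp

lemma pointwise {g : ℤ → ℂ} (hg : Rapid g) (m : ℕ) (S : ℝ)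
    (hS : ∀ i : ℤ, (1 + |(i:ℝ)|) ^ (m + 4) * ‖discLap g i‖ ≤ S) (n : ℤ) :
    (1 + |(n:ℝ)|) ^ m * ‖g n‖ ≤ Kc ^ 2 * S := by
  rcases le_or_gt 0 n with hn | hn
  · exact halfline hg m S hS hn
  · set g' : ℤ → ℂ := fun j => g (-j) with hg'
    have hr : Rapid g' := rapid_neg_comp hg
    have hS' : ∀ i : ℤ, (1 + |(i:ℝ)|) ^ (m + 4) * ‖discLap g' i‖ ≤ S := by
      intro i
      have hd : discLap g' i = discLap g (-i) := by
        simp only [hg', discLap]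
        have e1 : -(i + 1) = -i - 1 := by ring
        have e2 : -(i - 1) = -i + 1 := by ring
        rw [e1, e2]
        ring
      rw [hd]
      have := hS (-i)
      simpa using this
    have h := halfline hr (m := m) S hS' (n := -n) (by omega)
    have e : ((-n : ℤ):ℝ) = -(n:ℝ) := by push_cast; ring
    rw [e, abs_neg] at h
    simpa [hg'] using h

lemma core (m : ℕ) {g : ℤ → ℂ} (hg : Rapid g) :
    (⨆ n : ℤ, ENNReal.ofReal ((1 + |(n:ℝ)|) ^ m * ‖g n‖)) ≤
      ENNReal.ofReal (Kc ^ 2) *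
        ⨆ n : ℤ, ENNReal.ofReal ((1 + |(n:ℝ)|) ^ (m + 4) * ‖discLap g n‖) := by
  set T := ⨆ n : ℤ, ENNReal.ofReal ((1 + |(n:ℝ)|) ^ (m + 4) * ‖discLap g n‖) with hT
  by_cases hTtop : T = ⊤
  · rw [hTtop, ENNReal.mul_top ?hne]
    · exact le_top
    · simp only [ne_eq, ENNReal.ofReal_eq_zero, not_le]
      exact pow_pos Kc_pos 2
  · have hSb : ∀ i : ℤ, (1 + |(i:ℝ)|) ^ (m + 4) * ‖discLap g i‖ ≤ T.toReal := by
      intro i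
      refine (ENNReal.ofReal_le_iff_le_toReal hTtop).mp ?_
      exact le_iSup (fun n : ℤ => ENNReal.ofReal ((1 + |(n:ℝ)|) ^ (m + 4) * ‖discLap g n‖)) i
    refine iSup_le fun n => ?_
    calc ENNReal.ofReal ((1 + |(n:ℝ)|) ^ m * ‖g n‖)
        ≤ ENNReal.ofReal (Kc ^ 2 * T.toReal) :=
          ENNReal.ofReal_le_ofReal (pointwise hg m T.toReal hSb n)
      _ = ENNReal.ofReal (Kc ^ 2) * ENNReal.ofReal T.toReal :=
          ENNReal.ofReal_mul (by positivity)
      _ = ENNReal.ofReal (Kc ^ 2) * T := by rw [ENNReal.ofReal_toReal hTtop]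

lemma main (k : ℕ) : ∀ (m : ℕ) (g : ℤ → ℂ), Rapid g →
    (⨆ n : ℤ, ENNReal.ofReal ((1 + |(n:ℝ)|) ^ m * ‖g n‖)) ≤
      ENNReal.ofReal ((Kc ^ 2) ^ k) *
        ⨆ n : ℤ, ENNReal.ofReal ((1 + |(n:ℝ)|) ^ (m + 4 * k) * ‖(discLap^[k] g) n‖) := by
  induction k with
  | zero => intro m g hg; simp
  | succ k ih =>
    intro m g hg
    have h1 := core m hg
    have h2 := ih (m + 4) (discLap g) (rapid_discLap hg)
    rw [show m + 4 + 4 * k = m + 4 * (k + 1) by ring,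
      ← Function.iterate_succ_apply discLap k g] at h2
    calc (⨆ n : ℤ, ENNReal.ofReal ((1 + |(n:ℝ)|) ^ m * ‖g n‖))
        ≤ ENNReal.ofReal (Kc ^ 2) *
            ⨆ n : ℤ, ENNReal.ofReal ((1 + |(n:ℝ)|) ^ (m + 4) * ‖discLap g n‖) := h1
      _ ≤ ENNReal.ofReal (Kc ^ 2) * (ENNReal.ofReal ((Kc ^ 2) ^ k) *
            ⨆ n : ℤ, ENNReal.ofReal
              ((1 + |(n:ℝ)|) ^ (m + 4 * (k + 1)) * ‖(discLap^[k + 1] g) n‖)) :=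
          mul_le_mul_right h2 _
      _ = ENNReal.ofReal ((Kc ^ 2) ^ (k + 1)) *
            ⨆ n : ℤ, ENNReal.ofReal
              ((1 + |(n:ℝ)|) ^ (m + 4 * (k + 1)) * ‖(discLap^[k + 1] g) n‖) := by
          rw [← mul_assoc, ← ENNReal.ofReal_mul (by positivity : (0:ℝ) ≤ Kc ^ 2)]
          congr 2
          ring

/-- For every `m, k ∈ ℕ` there is `C = C(m,k) > 0` such that for every rapidly
decreasing `g : ℤ → ℂ`:
`sup_n (1+|n|)^m |g(n)| ≤ C · sup_n (1+|n|)^{m+4k} |Δ_d^k g(n)|` (suprema in `ℝ≥0∞`). -/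
theorem stmt16 (m k : ℕ) :
    ∃ C : ℝ, 0 < C ∧ ∀ g : ℤ → ℂ,
      (∀ N : ℕ, ∃ B : ℝ, ∀ n : ℤ, (1 + |(n : ℝ)|) ^ N * ‖g n‖ ≤ B) →
      (⨆ n : ℤ, ENNReal.ofReal ((1 + |(n : ℝ)|) ^ m * ‖g n‖)) ≤
        ENNReal.ofReal C *
          ⨆ n : ℤ, ENNReal.ofReal ((1 + |(n : ℝ)|) ^ (m + 4 * k) * ‖(discLap^[k] g) n‖) := by
  refine ⟨(Kc ^ 2) ^ k, by have := Kc_pos; positivity, fun g hg => ?_⟩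
  exact main k m g hg
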